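/- arXiv:1511.00635 — 2 statements merged into one kernel-verified Lean document; each statement's English description precedes it below -/
import Mathlib

section
/- Let S and T be positive trace-class operators on a Hilbert space ℍ with T invertible. If S ≤ T, then √S (log S) √S ≤ √S (log T) √S as self-adjoint operators (with the convention 0·log 0 = 0 on the kernel of S). -/
/-!
A strictly positive operator has diagonal entries bounded below along any Hilbert basis, so a
summable diagonal forces the basis, hence `H`, to be finite-dimensional. Then the spectrum of `S`
is finite, `Real.log` is continuous on it, and `√S (log S) √S` is the functional calculus of
`x ↦ x log x`. For `ε > 0`, the pointwise bound `x log x ≤ x log (x + ε)` and the operator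
monotonicity of `log` give `√S (log S) √S ≤ √S log (S + ε) √S ≤ √S log (T + ε) √S`; let `ε → 0`
using the continuity of `log` at the invertible `T`.
-/

open Filter Topology

namespace CFC

variable {A : Type*} [CStarAlgebra A] [PartialOrder A] [StarOrderedRing A]

lemma sqrt_mul_cfc_mul_sqrt {a : A} (f : ℝ → ℝ) (ha : 0 ≤ a)
    (hf : ContinuousOn f (spectrum ℝ a)) :
    sqrt a * cfc f a * sqrt a = cfc (fun x => x * f x) a := by
  rw [sqrt_eq_real_sqrt a ha, cfcₙ_eq_cfc, ← cfc_mul .., ← cfc_mul ..]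
  refine cfc_congr fun x hx => ?_
  rw [mul_right_comm, Real.mul_self_sqrt (spectrum_nonneg_of_nonneg ha hx)]

lemma log_add_algebraMap {a : A} (ha : 0 ≤ a) {ε : ℝ} (hε : 0 < ε) :
    log (a + algebraMap ℝ A ε) = cfc (fun x => Real.log (x + ε)) a := by
  have hcfc : a + algebraMap ℝ A ε = cfc (fun x => x + ε) a := by
    rw [cfc_add_const .., cfc_id' ..]
  rw [log, hcfc, ← cfc_comp' _ _ _ (Real.continuousOn_log.mono ?_)]
  rintro _ ⟨x, hx, rfl⟩
  exact (add_pos_of_nonneg_of_pos (spectrum_nonneg_of_nonneg ha hx) hε).ne'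

lemma sqrt_mul_log_mul_sqrt_le_add_algebraMap {a : A} (ha : 0 ≤ a)
    (hlog : ContinuousOn Real.log (spectrum ℝ a)) {ε : ℝ} (hε : 0 < ε) :
    sqrt a * log a * sqrt a ≤ sqrt a * log (a + algebraMap ℝ A ε) * sqrt a := by
  have hlogε : ContinuousOn (fun x => Real.log (x + ε)) (spectrum ℝ a) :=
    Real.continuousOn_log.comp (continuousOn_id.add continuousOn_const) fun x hx =>
      (add_pos_of_nonneg_of_pos (spectrum_nonneg_of_nonneg ha hx) hε).ne'
  rw [log_add_algebraMap ha hε, log, sqrt_mul_cfc_mul_sqrt _ ha hlog,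
    sqrt_mul_cfc_mul_sqrt _ ha hlogε]
  refine cfc_mono fun x hx => ?_
  rcases (spectrum_nonneg_of_nonneg ha hx).eq_or_lt with rfl | hx0
  · simp
  · exact mul_le_mul_of_nonneg_left (Real.log_le_log hx0 (by linarith)) hx0.le

lemma tendsto_log_add_algebraMap {b : A} (hb : IsStrictlyPositive b) :
    Tendsto (fun ε : ℝ => log (b + algebraMap ℝ A ε)) (𝓝[>] 0) (𝓝 (log b)) := by
  have hshift : Tendsto (fun ε : ℝ => b + algebraMap ℝ A ε) (𝓝[>] 0)
      (𝓝[{a | IsSelfAdjoint a ∧ IsUnit a}] b) := by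
    refine tendsto_nhdsWithin_iff.mpr ⟨?_, eventually_nhdsWithin_of_forall fun ε hε => ?_⟩
    · simpa using (tendsto_nhdsWithin_of_tendsto_nhds
        ((continuous_algebraMap ℝ A).tendsto 0)).const_add b
    · have hbε := hb.add_nonneg (isStrictlyPositive_algebraMap (A := A) (Set.mem_Ioi.mp hε)).nonneg
      exact ⟨hbε.isSelfAdjoint, hbε.isUnit⟩
  exact (continuousOn_log b ⟨hb.isSelfAdjoint, hb.isUnit⟩).tendsto.comp hshift

/-- Without continuity of `Real.log` on the spectrum of `a`, `log a` is the junk value `0`. -/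
theorem sqrt_mul_log_mul_sqrt_le_of_le {a b : A} (ha : 0 ≤ a) (hb : IsUnit b) (hab : a ≤ b)
    (hlog : ContinuousOn Real.log (spectrum ℝ a)) :
    sqrt a * log a * sqrt a ≤ sqrt a * log b * sqrt a := by
  refine ge_of_tendsto (((tendsto_log_add_algebraMap ⟨ha.trans hab, hb⟩).const_mul _).mul_const _)
    (eventually_nhdsWithin_of_forall fun ε (hε : 0 < ε) => ?_)
  have haε : IsStrictlyPositive (a + algebraMap ℝ A ε) :=
    (isStrictlyPositive_algebraMap hε).nonneg_add ha
  calc sqrt a * log a * sqrt a ≤ sqrt a * log (a + algebraMap ℝ A ε) * sqrt a :=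
        sqrt_mul_log_mul_sqrt_le_add_algebraMap ha hlog hε
    _ ≤ sqrt a * log (b + algebraMap ℝ A ε) * sqrt a :=
        IsSelfAdjoint.conjugate_le_conjugate (log_le_log (add_le_add_left hab _))
          (sqrt_nonneg a).isSelfAdjoint

end CFC

section HilbertSpace

variable {ι H : Type*} [NormedAddCommGroup H] [InnerProductSpace ℂ H]

lemma ContinuousLinearMap.finite_spectrum_real [FiniteDimensional ℂ H] (f : H →L[ℂ] H) :
    (spectrum ℝ f).Finite := by
  have : CompleteSpace H := FiniteDimensional.complete ℂ H
  rw [← spectrum.preimage_algebraMap ℂ, ContinuousLinearMap.spectrum_eq]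
  exact (Module.End.finite_spectrum _).preimage (algebraMap ℝ ℂ).injective.injOn

lemma ContinuousLinearMap.le_re_inner_apply_of_algebraMap_le {T : H →L[ℂ] H} {c : ℝ}
    (hcT : algebraMap ℝ (H →L[ℂ] H) c ≤ T) {v : H} (hv : ‖v‖ = 1) :
    c ≤ (inner ℂ v (T v)).re := by
  have h := ((ContinuousLinearMap.le_def _ _).mp hcT).re_inner_nonneg_right v
  rw [sub_apply, inner_sub_right, map_sub, Algebra.algebraMap_eq_smul_one] at h
  simpa [← Complex.coe_smul, inner_smul_right, inner_self_eq_norm_sq_to_K, hv] using h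

lemma HilbertBasis.finite_of_summable_re_inner_apply [CompleteSpace H] {T : H →L[ℂ] H}
    (hT : IsStrictlyPositive T) (b : HilbertBasis ι ℂ H)
    (hsum : Summable fun i => (inner ℂ (b i) (T (b i))).re) : Finite ι := by
  by_contra hinf
  have : Infinite ι := not_finite_iff_infinite.mp hinf
  have : Nontrivial H := ⟨⟨b (Classical.arbitrary ι), 0, b.orthonormal.ne_zero _⟩⟩
  obtain ⟨c, hc, hcT⟩ := (CFC.exists_pos_algebraMap_le_iff hT.isSelfAdjoint).mpr
    fun x hx => hT.spectrum_pos hx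
  exact hc.ne' <| (summable_const_iff c).mp <| hsum.of_nonneg_of_le (fun _ => hc.le)
    fun i => T.le_re_inner_apply_of_algebraMap_le hcT (b.orthonormal.1 i)

lemma HilbertBasis.finiteDimensional [Finite ι] (b : HilbertBasis ι ℂ H) :
    FiniteDimensional ℂ H :=
  have := Fintype.ofFinite ι
  Module.Finite.of_basis b.toOrthonormalBasis.toBasis

end HilbertSpace

/-- The trace of an operator computed along a Hilbert basis. -/
noncomputable def traceAlong {H ι : Type*} [NormedAddCommGroup H] [InnerProductSpace ℂ H]
    [CompleteSpace H] (b : HilbertBasis ι ℂ H) (T : H →L[ℂ] H) : ℝ :=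
  ∑' i, (inner ℂ (b i) (T (b i)) : ℂ).re

theorem sqrt_log_sqrt_le_of_le_general {H ι : Type*} [NormedAddCommGroup H]
    [InnerProductSpace ℂ H] [CompleteSpace H] (b : HilbertBasis ι ℂ H)
    (S T : H →L[ℂ] H)
    (hS : 0 ≤ S)
    (hTsum : Summable fun i => (inner ℂ (b i) (T (b i)) : ℂ).re)
    (hTinv : IsUnit T) (hST : S ≤ T) :
    CFC.sqrt S * CFC.log S * CFC.sqrt S ≤ CFC.sqrt S * CFC.log T * CFC.sqrt S := by
  have : Finite ι := b.finite_of_summable_re_inner_apply ⟨hS.trans hST, hTinv⟩ hTsum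
  have : FiniteDimensional ℂ H := b.finiteDimensional
  exact CFC.sqrt_mul_log_mul_sqrt_le_of_le hS hTinv hST (S.finite_spectrum_real.continuousOn _)

/-- Let `S` and `T` be positive trace-class operators (semi-density matrices) on a Hilbert
space with `T` invertible.  If `S ≤ T` in the Loewner order, then
`√S (log S) √S ≤ √S (log T) √S` (with `log` given by the continuous functional calculus,
realizing the convention `0 · log 0 = 0` on the kernel of `S`). -/
theorem sqrt_log_sqrt_le_of_le {H ι : Type*} [NormedAddCommGroup H]
    [InnerProductSpace ℂ H] [CompleteSpace H] [Countable ι] (b : HilbertBasis ι ℂ H)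
    (S T : H →L[ℂ] H)
    (hS : 0 ≤ S) (hT : 0 ≤ T)
    (hSsum : Summable fun i => (inner ℂ (b i) (S (b i)) : ℂ).re)
    (hTsum : Summable fun i => (inner ℂ (b i) (T (b i)) : ℂ).re)
    (hStr : traceAlong b S ≤ 1) (hTtr : traceAlong b T ≤ 1)
    (hTinv : IsUnit T) (hST : S ≤ T) :
    CFC.sqrt S * CFC.log S * CFC.sqrt S ≤ CFC.sqrt S * CFC.log T * CFC.sqrt S :=
  sqrt_log_sqrt_le_of_le_general b S T hS hTsum hTinv hST
end

section
/- Since x ↦ -log x is convex on (0,∞), for any density matrix ρ and any positive operator μ̂ with 0 < μ̂ ≤ 1 one has -log Tr(ρ μ̂) ≤ -Tr(ρ log μ̂); i.e., the lower Gacs complexity is bounded above by the upper Gacs complexity. -/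
open scoped ComplexOrder

/-!
In an orthonormal eigenbasis of `μ`, with eigenvalues `λᵢ > 0`, one has
`Tr(ρ f(μ)) = ∑ᵢ qᵢ f(λᵢ)` for every `f`, where `q` is the diagonal of `ρ` in that basis.
For a density matrix `ρ`, `q` is a probability vector, so the claim
`∑ᵢ qᵢ log λᵢ ≤ log ∑ᵢ qᵢ λᵢ` is Jensen's inequality for the concave logarithm.
-/

namespace Real

theorem concaveOn_logb_Ioi {b : ℝ} (hb : 1 ≤ b) : ConcaveOn ℝ (Set.Ioi 0) (logb b) := by
  have h := strictConcaveOn_log_Ioi.concaveOn.smul (inv_nonneg.mpr (log_nonneg hb))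
  have hlogb : logb b = fun x ↦ (log b)⁻¹ • log x := funext fun x ↦ by simp [logb, inv_mul_eq_div]
  rwa [hlogb]

end Real

namespace Matrix

variable {n 𝕜 : Type*} [RCLike 𝕜] [Fintype n] [DecidableEq n] {A : Matrix n n 𝕜}

noncomputable def IsHermitian.eigenbasisDiag (hA : A.IsHermitian) (ρ : Matrix n n 𝕜) : n → ℝ :=
  fun i ↦ RCLike.re ((star (hA.eigenvectorUnitary : Matrix n n 𝕜) * ρ * hA.eigenvectorUnitary) i i)

namespace IsHermitian

variable (hA : A.IsHermitian)

theorem sum_eigenbasisDiag (ρ : Matrix n n 𝕜) :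
    ∑ i, hA.eigenbasisDiag ρ i = RCLike.re ρ.trace := by
  let U : Matrix n n 𝕜 := hA.eigenvectorUnitary
  calc ∑ i, hA.eigenbasisDiag ρ i = RCLike.re (star U * ρ * U).trace := by
        simp [eigenbasisDiag, trace, U]
    _ = RCLike.re ρ.trace := by
        rw [trace_mul_cycle, Unitary.mul_star_self_of_mem hA.eigenvectorUnitary.2, one_mul]

theorem eigenbasisDiag_nonneg {ρ : Matrix n n 𝕜} (hρ : ρ.PosSemidef) (i : n) :
    0 ≤ hA.eigenbasisDiag ρ i := by
  have hconj := hρ.conjTranspose_mul_mul_same (hA.eigenvectorUnitary : Matrix n n 𝕜)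
  exact (RCLike.nonneg_iff.mp hconj.diag_nonneg).1

theorem re_trace_mul_cfc (ρ : Matrix n n 𝕜) (f : ℝ → ℝ) :
    RCLike.re (ρ * cfc f A).trace = ∑ i, hA.eigenbasisDiag ρ i * f (hA.eigenvalues i) := by
  rw [hA.cfc_eq, IsHermitian.cfc, Unitary.conjStarAlgAut_apply, ← mul_assoc, trace_mul_cycle,
    ← mul_assoc]
  simp [trace, mul_apply, diagonal, eigenbasisDiag]

end IsHermitian

end Matrix

theorem lowerGacs_le_upperGacs_general {d : ℕ} (ρ μ : Matrix (Fin d) (Fin d) ℂ)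
    (hρ : ρ.PosSemidef) (hρtr : ρ.trace = 1)
    (hμ : μ.PosDef) :
    -Real.logb 2 (((ρ * μ).trace).re) ≤ -(((ρ * cfc (Real.logb 2) μ).trace).re) := by
  have hA := hμ.isHermitian
  have hsum : ∑ i, hA.eigenbasisDiag ρ i = 1 := by simp [hA.sum_eigenbasisDiag, hρtr]
  have jensen := (Real.concaveOn_logb_Ioi one_le_two).le_map_sum (t := Finset.univ)
    (fun i _ ↦ hA.eigenbasisDiag_nonneg hρ i) hsum (fun i _ ↦ hμ.eigenvalues_pos i)
  have hμ_trace := hA.re_trace_mul_cfc ρ id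
  rw [cfc_id ℝ μ] at hμ_trace
  rw [neg_le_neg_iff, ← RCLike.re_to_complex, ← RCLike.re_to_complex, hμ_trace, hA.re_trace_mul_cfc]
  simpa using jensen

/-- For a density matrix `ρ` and a positive (injective) operator `μ̂` with `0 < μ̂ ≤ 1` and
`Tr μ̂ ≤ 1`, one has `-log Tr(ρ μ̂) ≤ -Tr(ρ log μ̂)`: the lower Gacs complexity is bounded
above by the upper Gacs complexity (logarithms in base 2). -/
theorem lowerGacs_le_upperGacs {d : ℕ} (ρ μ : Matrix (Fin d) (Fin d) ℂ)
    (hρ : ρ.PosSemidef) (hρtr : ρ.trace = 1)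
    (hμ : μ.PosDef) (hμ1 : (1 - μ).PosSemidef) (hμtr : (μ.trace).re ≤ 1) :
    -Real.logb 2 (((ρ * μ).trace).re) ≤ -(((ρ * cfc (Real.logb 2) μ).trace).re) :=
  lowerGacs_le_upperGacs_general ρ μ hρ hρtr hμ
end
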